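/- arXiv:2602.15748 — 5 statements merged into one kernel-verified Lean document; each statement's English description precedes it below -/
import Mathlib

section
/- Let A be a finite-dimensional commutative ℚ-algebra with unit. A full lattice Λ ⊆ A is an idempotent of the semigroup of full lattices under lattice multiplication (i.e., Λ·Λ = Λ) if and only if Λ is an order. -/
def IsFullLattice {A : Type*} [CommRing A] [Algebra ℚ A] (L : Submodule ℤ A) : Prop :=
  L.FG ∧ Submodule.span ℚ (L : Set A) = ⊤

/-!
If `Λ · Λ = Λ` and `Λ` is finitely generated, then `Λ` is a module over the ring `B` generated by
`Λ`, and `Λ ∩ B` is an ideal `I` of `B` with `Λ = I • Λ`. The determinant trick (Nakayama) gives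
`e ∈ Λ` acting as the identity on `Λ`; since `Λ` spans `A` over `ℚ`, this forces `e = 1`.
Conversely, if `1 ∈ Λ` then `Λ = Λ · 1 ⊆ Λ · Λ`.
-/

theorem eq_one_of_forall_mul_eq_self_of_span_eq_top {K A : Type*} [CommSemiring K] [Semiring A]
    [Algebra K A] {S : Set A} (hS : Submodule.span K S = ⊤) {e : A}
    (he : ∀ x ∈ S, e * x = x) : e = 1 := by
  have hspan : Submodule.span K S ≤ LinearMap.eqLocus (LinearMap.mulLeft K e) LinearMap.id :=
    Submodule.span_le.mpr he
  simpa using hspan (hS ▸ Submodule.mem_top : (1 : A) ∈ Submodule.span K S)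

namespace Submodule

variable {R A : Type*} [CommRing R] [CommRing A] [Algebra R A] {L : Submodule R A}

theorem mul_mem_of_mem_adjoin (hL : L * L ≤ L) {b : A} (hb : b ∈ Algebra.adjoin R (L : Set A))
    {x : A} (hx : x ∈ L) : b * x ∈ L := by
  induction hb using Algebra.adjoin_induction generalizing x with
  | mem a ha => exact hL (mul_mem_mul ha hx)
  | algebraMap r => rw [← Algebra.smul_def]; exact L.smul_mem r hx
  | add a b _ _ ha hb => rw [add_mul]; exact L.add_mem (ha hx) (hb hx)
  | mul a b _ _ ha hb => rw [mul_assoc]; exact ha (hb hx)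

def toAdjoinSubmodule (hL : L * L ≤ L) : Submodule (Algebra.adjoin R (L : Set A)) A where
  carrier := L
  add_mem' := L.add_mem
  zero_mem' := L.zero_mem
  smul_mem' b _ hx := mul_mem_of_mem_adjoin hL b.2 hx

theorem exists_mem_and_mul_eq_self_of_fg_of_mul_self_eq (hfg : L.FG) (hL : L * L = L) :
    ∃ e ∈ L, ∀ x ∈ L, e * x = x := by
  let B := Algebra.adjoin R (L : Set A)
  let N := toAdjoinSubmodule hL.le
  let I : Ideal B := N.comap (Algebra.linearMap B A)
  have hNfg : N.FG := FG.of_restrictScalars R hfg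
  have hNI : N ≤ I • N := by
    intro x hx
    have hx : x ∈ L * L := by rw [hL]; exact hx
    refine Submodule.mul_induction_on hx (fun a ha c hc => ?_) (fun _ _ => (I • N).add_mem)
    exact smul_mem_smul (r := (⟨a, Algebra.subset_adjoin ha⟩ : B)) ha hc
  obtain ⟨e, heI, he⟩ := exists_mem_and_smul_eq_self_of_fg_of_le_smul I N hNfg hNI
  exact ⟨e, heI, he⟩

end Submodule

theorem stmt_7_general {A : Type*} [CommRing A] [Algebra ℚ A]
    (Λ : Submodule ℤ A) (hΛ : IsFullLattice Λ) :
    Λ * Λ = Λ ↔ ((1 : A) ∈ Λ ∧ Λ * Λ ≤ Λ) := by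
  constructor
  · intro h
    obtain ⟨e, heΛ, he⟩ := Λ.exists_mem_and_mul_eq_self_of_fg_of_mul_self_eq hΛ.1 h
    obtain rfl : e = 1 := eq_one_of_forall_mul_eq_self_of_span_eq_top hΛ.2 he
    exact ⟨heΛ, h.le⟩
  · rintro ⟨h1, hle⟩
    refine le_antisymm hle ?_
    calc Λ = Λ * 1 := (mul_one Λ).symm
      _ ≤ Λ * Λ := mul_le_mul_right (Submodule.one_le.mpr h1) Λ

theorem stmt_7 {A : Type*} [CommRing A] [Algebra ℚ A] [FiniteDimensional ℚ A]
    (Λ : Submodule ℤ A) (hΛ : IsFullLattice Λ) :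
    Λ * Λ = Λ ↔ ((1 : A) ∈ Λ ∧ Λ * Λ ≤ Λ) :=
  stmt_7_general Λ hΛ
end

section
/- Let A be a finite-dimensional commutative ℚ-algebra with unit, Λ an order in A, and L a full lattice with 1_A ∈ L, L ⊆ Λ, and L not an order. Then there is a unique l ≥ 2 such that L ⊊ L² ⊊ ... ⊊ L^l = L^{l+k} ⊆ Λ for all k ≥ 1; moreover L^l is an order with L·L^l = L^l, and the lattices L, L², ..., L^{l-1} are not invertible in the semigroup of full lattices. -/
/-- Invertibility in the commutative semigroup of full lattices. -/
def IsInvLat {A : Type*} [CommRing A] [Algebra ℚ A] (L : Submodule ℤ A) : Prop :=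
  ∃ B C : Submodule ℤ A, IsFullLattice B ∧ IsFullLattice C ∧ L * B = C ∧ L * C = L

section PowerChain

variable {M : Type*}

theorem pow_add_eq_of_pow_succ_eq [Monoid M] {a : M} {n : ℕ} (h : a ^ (n + 1) = a ^ n) :
    ∀ k, a ^ (n + k) = a ^ n
  | 0 => rfl
  | k + 1 => by rw [← add_assoc, pow_succ, pow_add_eq_of_pow_succ_eq h k, ← pow_succ, h]

theorem pow_le_of_le_of_mul_self_le [Monoid M] [Preorder M] [MulLeftMono M] [MulRightMono M]
    {a b : M} (hb1 : 1 ≤ b) (hbb : b * b ≤ b) (hab : a ≤ b) : ∀ n, a ^ n ≤ b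
  | 0 => by rwa [pow_zero]
  | n + 1 => by
    rw [pow_succ]
    exact (mul_le_mul' (pow_le_of_le_of_mul_self_le hb1 hbb hab n) hab).trans hbb

theorem exists_pow_lt_pow_succ_and_pow_add_eq [Monoid M] [PartialOrder M] [MulLeftMono M]
    {a : M} (ha : 1 ≤ a) (h : ∃ n, a ^ (n + 1) = a ^ n) :
    ∃ l, (∀ k < l, a ^ k < a ^ (k + 1)) ∧ ∀ k, a ^ (l + k) = a ^ l := by
  classical
  refine ⟨Nat.find h, fun k hk => ?_, pow_add_eq_of_pow_succ_eq (Nat.find_spec h)⟩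
  exact (pow_le_pow_right' ha k.le_succ).lt_of_ne fun hk' => Nat.find_min h hk hk'.symm

theorem pow_succ_eq_of_pow_mul_mul_pow_eq [CommMonoid M] {a b : M} {k n : ℕ} (hk : 1 ≤ k)
    (hkn : k ≤ n) (hreg : a ^ k * b * a ^ k = a ^ k) (hstab : a ^ (n + 2) = a ^ (n + 1)) :
    a ^ (n + 1) = a ^ n := by
  have hshift : ∀ m, k ≤ m → a ^ m = a ^ (m + k) * b := fun m hm => by
    obtain ⟨j, rfl⟩ := Nat.exists_eq_add_of_le hm
    calc a ^ (k + j) = a ^ j * (a ^ k * b * a ^ k) := by rw [hreg, pow_add, mul_comm]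
      _ = a ^ (k + j + k) * b := by simp only [pow_add]; ac_rfl
  have hsat : ∀ j, a ^ (n + 1 + j) = a ^ (n + 1) := pow_add_eq_of_pow_succ_eq hstab
  symm
  calc a ^ n = a ^ (n + 1 + (k - 1)) * b := by rw [hshift n hkn]; congr 2; omega
    _ = a ^ (n + 1 + k) * b := by rw [hsat, hsat]
    _ = a ^ (n + 1) := (hshift (n + 1) (by omega)).symm

end PowerChain

theorem Submodule.exists_forall_eq_of_monotone_of_le_fg {R M : Type*} [Ring R] [IsNoetherianRing R]
    [AddCommGroup M] [Module R M] {N : Submodule R M} (hN : N.FG) (f : ℕ →o Submodule R M)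
    (hf : ∀ n, f n ≤ N) : ∃ n, ∀ m, n ≤ m → f n = f m := by
  have := isNoetherian_of_fg_of_noetherian N hN
  obtain ⟨n, hn⟩ := monotone_stabilizes_iff_noetherian.mpr this
    ⟨fun n => (f n).comap N.subtype, fun _ _ h => Submodule.comap_mono (f.mono h)⟩
  refine ⟨n, fun m hm => ?_⟩
  have h : (f n).comap N.subtype = (f m).comap N.subtype := hn m hm
  simpa only [Submodule.map_comap_subtype, inf_eq_right.mpr (hf _)]
    using congrArg (Submodule.map N.subtype) h

theorem IsInvLat.exists_mul_mul_self_eq {A : Type*} [CommRing A] [Algebra ℚ A]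
    {L : Submodule ℤ A} (h : IsInvLat L) : ∃ B, L * B * L = L := by
  obtain ⟨B, C, -, -, hB, hC⟩ := h
  exact ⟨B, by rw [hB, mul_comm, hC]⟩

theorem stmt_8_general {A : Type*} [CommRing A] [Algebra ℚ A]
    (Λ L : Submodule ℤ A) (hΛ : IsFullLattice Λ) (hΛ1 : (1 : A) ∈ Λ)
    (hΛm : Λ * Λ ≤ Λ) (hL1 : (1 : A) ∈ L) (hLΛ : L ≤ Λ)
    (hnot : ¬ ((1 : A) ∈ L ∧ L * L ≤ L)) :
    ∃! l : ℕ, 2 ≤ l ∧ (∀ k, 1 ≤ k → k < l → L ^ k < L ^ (k + 1)) ∧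
      (∀ k, L ^ (l + k) = L ^ l) ∧ L ^ l ≤ Λ ∧
      ((1 : A) ∈ L ^ l ∧ L ^ l * L ^ l ≤ L ^ l) ∧ L * L ^ l = L ^ l ∧
      (∀ k, 1 ≤ k → k < l → ¬ IsInvLat (L ^ k)) := by
  have h1L : 1 ≤ L := Submodule.one_le.mpr hL1
  have hpowΛ : ∀ n, L ^ n ≤ Λ := pow_le_of_le_of_mul_self_le (Submodule.one_le.mpr hΛ1) hΛm hLΛ
  obtain ⟨n, hn⟩ := Submodule.exists_forall_eq_of_monotone_of_le_fg hΛ.1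
    ⟨(L ^ ·), fun _ _ => pow_le_pow_right' h1L⟩ hpowΛ
  obtain ⟨l, hstrict, hsat⟩ :=
    exists_pow_lt_pow_succ_and_pow_add_eq h1L ⟨n, (hn (n + 1) n.le_succ).symm⟩
  have hl : 2 ≤ l := by
    by_contra! hl
    refine hnot ⟨hL1, le_of_eq ?_⟩
    calc L * L = L ^ (l + (2 - l)) := by rw [show l + (2 - l) = 2 by omega, pow_two]
      _ = L ^ (l + (1 - l)) := by rw [hsat, hsat]
      _ = L := by rw [show l + (1 - l) = 1 by omega, pow_one]
  refine ⟨l, ⟨hl, fun k _ hk => hstrict k hk, hsat, hpowΛ l, ⟨?_, ?_⟩, ?_, ?_⟩, ?_⟩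
  · exact Submodule.one_le.mp (one_le_pow_of_one_le' h1L l)
  · rw [← pow_add, hsat]
  · rw [← pow_succ', hsat 1]
  · rintro k hk1 hkl hinv
    obtain ⟨B, hB⟩ := hinv.exists_mul_mul_self_eq
    obtain ⟨m, rfl⟩ : ∃ m, l = m + 1 := ⟨l - 1, by omega⟩
    exact (hstrict m (by omega)).ne
      (pow_succ_eq_of_pow_mul_mul_pow_eq hk1 (by omega) hB (hsat 1)).symm
  · rintro l' ⟨hl', hstrict', hsat', -⟩
    rcases lt_trichotomy l' l with h | rfl | h
    · exact absurd (hsat' 1) (hstrict l' h).ne'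
    · rfl
    · exact absurd (hsat 1) (hstrict' l (by omega) h).ne'

theorem stmt_8 {A : Type*} [CommRing A] [Algebra ℚ A] [FiniteDimensional ℚ A]
    (Λ L : Submodule ℤ A) (hΛ : IsFullLattice Λ) (hΛ1 : (1 : A) ∈ Λ)
    (hΛm : Λ * Λ ≤ Λ) (hL : IsFullLattice L) (hL1 : (1 : A) ∈ L) (hLΛ : L ≤ Λ)
    (hnot : ¬ ((1 : A) ∈ L ∧ L * L ≤ L)) :
    ∃! l : ℕ, 2 ≤ l ∧ (∀ k, 1 ≤ k → k < l → L ^ k < L ^ (k + 1)) ∧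
      (∀ k, L ^ (l + k) = L ^ l) ∧ L ^ l ≤ Λ ∧
      ((1 : A) ∈ L ^ l ∧ L ^ l * L ^ l ≤ L ^ l) ∧ L * L ^ l = L ^ l ∧
      (∀ k, 1 ≤ k → k < l → ¬ IsInvLat (L ^ k)) :=
  stmt_8_general Λ L hΛ hΛ1 hΛm hL1 hLΛ hnot
end

section
/- Let A = ℚ·1 ⊕ ℚ·a with a² = 0. Then the orders in A are exactly the lattices ℤ·1 + ℤ·(αa) for α ∈ ℚ_{>0}, and every full lattice in A is invertible; in fact every full lattice equals u·Λ for some unit u ∈ A and some order Λ. -/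
/-! The projection `fst L` and the slice `L ∩ ℚε` of a full lattice `L ⊆ ℚ[ε]` are finitely
generated ℤ-submodules of `ℚ`, hence cyclic: `fst L = ℤβ` and `L ∩ ℚε = ℤδε`, with `β, δ ≠ 0`
because `L` spans. Lifting `β` to `x₀ ∈ L` gives `L = ℤx₀ + ℤδε = x₀ (ℤ + ℤ(δ/β)ε)`, and `x₀` is a
unit since its first coordinate is nonzero. For an order `Λ`, `fst Λ` is a finitely generated
subring of `ℚ`, so it consists of integers and one may take `x₀ = 1`. Finally, if `L = uΛ` with `Λ`
an order, then `L / L = Λ = L · u⁻¹Λ`. -/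
open Submodule TrivSqZeroExt DualNumber

def IsOrder {A : Type*} [CommRing A] [Algebra ℚ A] (Λ : Submodule ℤ A) : Prop :=
  IsFullLattice Λ ∧ (1 : A) ∈ Λ ∧ Λ * Λ ≤ Λ

namespace Submodule

variable {R A : Type*} [CommSemiring R] [CommSemiring A] [Algebra R A]

theorem mul_self_eq_of_one_mem {Λ : Submodule R A} (h1 : (1 : A) ∈ Λ) (hmul : Λ * Λ ≤ Λ) :
    Λ * Λ = Λ :=
  hmul.antisymm (by simpa using mul_le_mul_left (one_le.2 h1) Λ)

theorem span_singleton_mul_div_self {u : A} (hu : IsUnit u) {Λ : Submodule R A}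
    (h1 : (1 : A) ∈ Λ) (hmul : Λ * Λ ≤ Λ) :
    (span R {u} * Λ) / (span R {u} * Λ) = Λ := by
  refine le_antisymm (fun x hx => ?_) (le_div_iff_mul_le.2 ?_)
  · obtain ⟨z, hz, hzx⟩ := mem_span_singleton_mul.1 <|
      mem_div_iff_forall_mul_mem.1 hx u (mem_span_singleton_mul.2 ⟨1, h1, mul_one u⟩)
    rwa [← hu.mul_left_cancel (hzx.trans (mul_comm x u))]
  · rw [mul_left_comm, mul_self_eq_of_one_mem h1 hmul]

end Submodule

theorem IsFullLattice.span_singleton_mul {A : Type*} [CommRing A] [Algebra ℚ A]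
    {L : Submodule ℤ A} (hL : IsFullLattice L) {u : A} (hu : IsUnit u) :
    IsFullLattice (span ℤ {u} * L) := by
  refine ⟨(fg_span_singleton u).mul hL.1, ?_⟩
  rw [Submodule.span_singleton_mul, coe_pointwise_smul, span_smul, hL.2]
  refine eq_top_iff.2 fun x _ =>
    (mem_smul_pointwise_iff_exists _ _ _).2 ⟨↑hu.unit⁻¹ * x, trivial, ?_⟩
  simp [smul_eq_mul, ← mul_assoc]

namespace Rat

theorem exists_nonneg_span_eq_of_le_fg {M N : Submodule ℤ ℚ} (hM : M.FG) (hNM : N ≤ M) :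
    ∃ δ : ℚ, 0 ≤ δ ∧ N = span ℤ {δ} := by
  let I : FractionalIdeal (nonZeroDivisors ℤ) ℚ :=
    ⟨N, FractionalIdeal.isFractional_of_le (J := ⟨M, FractionalIdeal.isFractional_of_fg hM⟩) hNM⟩
  obtain ⟨δ, hδ⟩ := (FractionalIdeal.isPrincipal I).principal
  refine ⟨|δ|, abs_nonneg δ, hδ.trans ?_⟩
  rcases abs_choice δ with h | h <;> rw [h]
  rw [← Set.neg_singleton, span_neg]

theorem span_one_eq_of_fg_of_mul_le {M : Submodule ℤ ℚ} (hM : M.FG) (h1 : (1 : ℚ) ∈ M)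
    (hmul : M * M ≤ M) : M = span ℤ {1} := by
  refine le_antisymm (fun q hq => ?_) (span_le.2 (by simpa using h1))
  have hint : IsIntegral ℤ q :=
    isIntegral_of_smul_mem_submodule M ((Submodule.ne_bot_iff M).2 ⟨1, h1, one_ne_zero⟩) hM q
      fun _ hn => hmul (mul_mem_mul hq hn)
  obtain ⟨n, rfl⟩ := IsIntegrallyClosed.isIntegral_iff.1 hint
  exact mem_span_singleton.2 ⟨n, by simp⟩

end Rat

namespace DualNumber

noncomputable def fstLinear : ℚ[ε] →ₗ[ℤ] ℚ := (fstHom ℚ ℚ ℚ).toLinearMap.restrictScalars ℤ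

noncomputable def sndLinear : ℚ[ε] →ₗ[ℤ] ℚ := (sndHom ℚ ℚ).restrictScalars ℤ

noncomputable def inrLinear : ℚ →ₗ[ℤ] ℚ[ε] := (inrHom ℚ ℚ).restrictScalars ℤ

@[simp] theorem fstLinear_apply (x : ℚ[ε]) : fstLinear x = x.fst := rfl

@[simp] theorem inrLinear_apply (q : ℚ) : inrLinear q = inr q := rfl

theorem eq_span_pair_of_map_fst_of_comap_inr {L : Submodule ℤ ℚ[ε]} {x₀ : ℚ[ε]} (hx₀ : x₀ ∈ L)
    {δ : ℚ} (hfst : L.map fstLinear = span ℤ {x₀.fst}) (hinr : L.comap inrLinear = span ℤ {δ}) :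
    L = span ℤ {x₀, inr δ} := by
  have hδ : inr δ ∈ L := by
    simpa using (hinr.ge (mem_span_singleton_self δ) : δ ∈ L.comap inrLinear)
  refine le_antisymm (fun x hx => ?_) (span_le.2 (Set.insert_subset hx₀ (by simpa using hδ)))
  obtain ⟨n, hn⟩ := mem_span_singleton.1 (hfst ▸ mem_map_of_mem hx : x.fst ∈ span ℤ {x₀.fst})
  have hker : x - n • x₀ = inr (x - n • x₀).snd := by
    ext
    · simp [← hn]
    · rfl
  have hmem : (x - n • x₀).snd ∈ L.comap inrLinear := by
    rw [mem_comap, inrLinear_apply, ← hker]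
    exact L.sub_mem hx (L.smul_mem n hx₀)
  obtain ⟨m, hm⟩ := mem_span_singleton.1 (hinr ▸ hmem)
  refine mem_span_pair.2 ⟨n, m, ?_⟩
  rw [← inr_smul, hm, ← hker]
  abel

theorem fst_ne_zero_and_ne_zero_of_span_pair_eq_top {x : ℚ[ε]} {δ : ℚ}
    (h : span ℚ {x, inr δ} = ⊤) : x.fst ≠ 0 ∧ δ ≠ 0 := by
  have hfst : x.fst ≠ 0 := by
    intro hx
    have hle : span ℚ {x, inr δ} ≤ LinearMap.ker (fstHom ℚ ℚ ℚ).toLinearMap :=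
      span_le.2 (Set.insert_subset (by simpa using hx) (by simp))
    simpa using hle (h ▸ mem_top : (1 : ℚ[ε]) ∈ span ℚ {x, inr δ})
  refine ⟨hfst, fun hδ => ?_⟩
  have hε : (ε : ℚ[ε]) ∈ span ℚ {x} := by
    simpa [hδ, Set.pair_comm x, span_insert_zero] using
      (h ▸ mem_top : (ε : ℚ[ε]) ∈ span ℚ {x, inr δ})
  obtain ⟨q, hq⟩ := mem_span_singleton.1 hε
  have hq0 : q = 0 := by simpa [hfst] using congrArg fst hq
  simpa [hq0] using congrArg snd hq

theorem exists_eq_span_pair_of_isFullLattice {L : Submodule ℤ ℚ[ε]} (hL : IsFullLattice L)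
    {x₀ : ℚ[ε]} (hx₀ : x₀ ∈ L) (hfst : L.map fstLinear = span ℤ {x₀.fst}) :
    x₀.fst ≠ 0 ∧ ∃ δ : ℚ, 0 < δ ∧ L = span ℤ {x₀, inr δ} := by
  have hle : L.comap inrLinear ≤ L.map sndLinear := fun q hq => ⟨inr q, hq, rfl⟩
  obtain ⟨δ, hδ, hinr⟩ := Rat.exists_nonneg_span_eq_of_le_fg (hL.1.map sndLinear) hle
  have hLeq := eq_span_pair_of_map_fst_of_comap_inr hx₀ hfst hinr
  have hspan := hL.2
  rw [hLeq, span_span_of_tower] at hspan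
  obtain ⟨hx₀0, hδ0⟩ := fst_ne_zero_and_ne_zero_of_span_pair_eq_top hspan
  exact ⟨hx₀0, δ, hδ.lt_of_ne' hδ0, hLeq⟩

theorem map_fst_eq_span_one_of_isOrder {Λ : Submodule ℤ ℚ[ε]} (hΛ : IsOrder Λ) :
    Λ.map fstLinear = span ℤ {1} := by
  obtain ⟨⟨hfg, -⟩, h1, hmul⟩ := hΛ
  refine Rat.span_one_eq_of_fg_of_mul_le (hfg.map _) ⟨1, h1, rfl⟩ (mul_le.2 ?_)
  rintro _ ⟨x, hx, rfl⟩ _ ⟨y, hy, rfl⟩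
  exact ⟨x * y, hmul (mul_mem_mul hx hy), by simp⟩

theorem exists_eq_span_one_inr_of_isOrder {Λ : Submodule ℤ ℚ[ε]} (hΛ : IsOrder Λ) :
    ∃ α : ℚ, 0 < α ∧ Λ = span ℤ {1, inr α} :=
  (exists_eq_span_pair_of_isFullLattice hΛ.1 hΛ.2.1 (map_fst_eq_span_one_of_isOrder hΛ)).2

theorem isOrder_span_one_inr {α : ℚ} (hα : α ≠ 0) :
    IsOrder (span ℤ {1, inr α} : Submodule ℤ ℚ[ε]) := by
  refine ⟨⟨fg_span (Set.toFinite _), ?_⟩, subset_span (Set.mem_insert _ _), ?_⟩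
  · refine eq_top_iff.2 fun x _ => ?_
    rw [span_span_of_tower, mem_span_pair]
    refine ⟨x.fst, x.snd / α, ?_⟩
    ext <;> simp [hα]
  · rw [span_mul_span, span_le]
    rintro _ ⟨x, hx, y, hy, rfl⟩
    rcases hx with rfl | rfl <;> rcases hy with rfl | rfl <;> simp [mem_span_of_mem]

theorem span_singleton_mul_span_one_inr (x : ℚ[ε]) (α : ℚ) :
    span ℤ {x} * span ℤ {1, inr α} = span ℤ {x, inr (x.fst * α)} := by
  rw [span_mul_span, Set.singleton_mul, Set.image_pair, mul_one]
  congr 3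
  ext <;> simp [mul_comm]

theorem exists_isUnit_eq_span_singleton_mul {L : Submodule ℤ ℚ[ε]} (hL : IsFullLattice L) :
    ∃ u : ℚ[ε], ∃ α : ℚ, IsUnit u ∧ 0 < α ∧ L = span ℤ {u} * span ℤ {1, inr α} := by
  obtain ⟨β, hβ, hfst⟩ := Rat.exists_nonneg_span_eq_of_le_fg (hL.1.map fstLinear) le_rfl
  obtain ⟨x₀, hx₀, rfl⟩ := (hfst.ge (mem_span_singleton_self β) : β ∈ L.map fstLinear)
  obtain ⟨hβ0, δ, hδ, rfl⟩ := exists_eq_span_pair_of_isFullLattice hL hx₀ hfst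
  refine ⟨x₀, δ / x₀.fst, isUnit_iff_isUnit_fst.2 (isUnit_iff_ne_zero.2 hβ0),
    div_pos hδ (hβ.lt_of_ne' hβ0), ?_⟩
  rw [span_singleton_mul_span_one_inr, mul_div_cancel₀ _ hβ0]

end DualNumber

theorem stmt_11 :
    let a : DualNumber ℚ := DualNumber.eps
    (∀ Λ : Submodule ℤ (DualNumber ℚ),
      (IsFullLattice Λ ∧ (1 : DualNumber ℚ) ∈ Λ ∧ Λ * Λ ≤ Λ) ↔
      (∃ α : ℚ, 0 < α ∧
        Λ = Submodule.span ℤ ({1, α • a} : Set (DualNumber ℚ)))) ∧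
    (∀ L : Submodule ℤ (DualNumber ℚ), IsFullLattice L →
      (∃ B : Submodule ℤ (DualNumber ℚ), IsFullLattice B ∧ L * B = L / L) ∧
      (∃ u : DualNumber ℚ, ∃ Λ : Submodule ℤ (DualNumber ℚ), IsUnit u ∧
        IsFullLattice Λ ∧ (1 : DualNumber ℚ) ∈ Λ ∧ Λ * Λ ≤ Λ ∧
        (L : Set (DualNumber ℚ)) = (fun x => u * x) '' (Λ : Set (DualNumber ℚ)))) := by
  intro a
  simp only [a, ← inr_eq_smul_eps]
  refine ⟨fun Λ => ⟨exists_eq_span_one_inr_of_isOrder, ?_⟩, fun L hL => ?_⟩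
  · rintro ⟨α, hα, rfl⟩
    exact isOrder_span_one_inr hα.ne'
  obtain ⟨u, α, hu, hα, rfl⟩ := exists_isUnit_eq_span_singleton_mul hL
  obtain ⟨hΛfull, h1, hmul⟩ := isOrder_span_one_inr hα.ne'
  refine ⟨⟨span ℤ {↑hu.unit⁻¹} * span ℤ {1, inr α},
    hΛfull.span_singleton_mul (Units.isUnit _), ?_⟩, u, _, hu, hΛfull, h1, hmul, ?_⟩
  · rw [span_singleton_mul_div_self hu h1 hmul, mul_mul_mul_comm (span ℤ {u}),
      mul_self_eq_of_one_mem h1 hmul, span_mul_span, Set.singleton_mul_singleton,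
      IsUnit.mul_val_inv, ← one_eq_span, Submodule.one_mul]
  · rw [Submodule.span_singleton_mul, coe_pointwise_smul, ← Set.image_smul]
    rfl
end

section
/- Let f(t) = t² − rt + s ∈ ℤ[t] be irreducible over ℚ with r²/4 − s < 0. Then the set M(r,s) of matrices [[a,b],[c,d]] ∈ M₂(ℤ) with a+d = r, ad−bc = s, 0 < |c| ≤ |b|, a−d ∈ (−|c|, |c|], and additionally a−d ∈ [0,|c|] when |c| = |b|, is finite, and every SL₂(ℤ)-conjugacy class of integer matrices with characteristic polynomial f contains exactly one matrix of M(r,s). -/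
/-!
A matrix `!![a, b; c, d]` with trace `r` and determinant `s` carries the binary quadratic form
`c x² + (d - a) x y - b y²` of discriminant `r² - 4 s < 0`, and conjugating the matrix by
`U ∈ SL₂(ℤ)` substitutes `U` into the form. Up to the signs of `b` and `c`, `M(r, s)` is the set of
matrices whose form is reduced, so the theorem is Gauss–Lagrange reduction theory for positive
definite forms. Existence: move the middle coefficient into `[-|c|, |c|)` with a power of `T`, and
if the outer coefficients are out of order swap them with `S` and descend on `|c|`. Uniqueness: the
first coefficient of a reduced form is its minimum over nonzero integer vectors, attained only at
`±(1, 0)` and, on the boundary, at `±(0, 1)` or `±(1, 1)`; this leaves so few transforming matrices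
that the two reduced forms must coincide. Finiteness: a reduced form of fixed discriminant has
bounded coefficients.
-/

open ModularGroup
open scoped MatrixGroups

theorem ne_zero_or_ne_zero_of_mul_sub_mul_eq_one {R : Type*} [CommRing R] [Nontrivial R]
    {p q u v : R} (h : p * v - q * u = 1) : p ≠ 0 ∨ u ≠ 0 := by
  by_contra! h0
  obtain ⟨rfl, rfl⟩ := h0
  simp at h

theorem one_le_sq_sub_abs_mul_add_sq {x y : ℤ} (hxy : x ≠ 0 ∨ y ≠ 0) :
    1 ≤ x ^ 2 - |x * y| + y ^ 2 := by
  rw [abs_mul, ← sq_abs x, ← sq_abs y]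
  have hx := abs_nonneg x
  have hy := abs_nonneg y
  rcases hxy with hx0 | hy0
  · have := Int.one_le_abs hx0
    nlinarith
  · have := Int.one_le_abs hy0
    nlinarith

/-- Reducedness of `A x² + m x y + C y²`, with the boundary conventions mirrored from the usual
`m ∈ (-A, A]`, `m ≥ 0` when `A = C`. -/
def IsReducedForm (A m C : ℤ) : Prop :=
  0 < A ∧ A ≤ C ∧ -A ≤ m ∧ m < A ∧ (A = C → m ≤ 0)

/-- For a reduced form and a nonzero vector all three summands are nonnegative. -/
theorem form_sub_first_coeff_eq (A m C x y : ℤ) : A * x ^ 2 + m * x * y + C * y ^ 2 - A =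
    A * (x ^ 2 - |x * y| + y ^ 2 - 1) + (C - A) * y ^ 2 + (m * (x * y) + A * |x * y|) := by
  ring

namespace IsReducedForm

variable {A m C : ℤ}

theorem neg_mul_abs_le (h : IsReducedForm A m C) (x y : ℤ) : -(A * |x * y|) ≤ m * (x * y) := by
  have hm : |m| ≤ A := abs_le.2 ⟨h.2.2.1, h.2.2.2.1.le⟩
  have := neg_abs_le (m * (x * y))
  rw [abs_mul] at this
  nlinarith [abs_nonneg (x * y)]

theorem le_eval (h : IsReducedForm A m C) {x y : ℤ} (hxy : x ≠ 0 ∨ y ≠ 0) :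
    A ≤ A * x ^ 2 + m * x * y + C * y ^ 2 := by
  have h₁ := mul_nonneg h.1.le (sub_nonneg.2 (one_le_sq_sub_abs_mul_add_sq hxy))
  have h₂ := mul_nonneg (sub_nonneg.2 h.2.1) (sq_nonneg y)
  linarith [form_sub_first_coeff_eq A m C x y, h.neg_mul_abs_le x y]

theorem eq_zero_or_of_eval_eq (h : IsReducedForm A m C) {x y : ℤ}
    (hQ : A * x ^ 2 + m * x * y + C * y ^ 2 = A) :
    y = 0 ∨ (A = C ∧ x = 0) ∨ (A = C ∧ m = -A ∧ x = y) := by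
  rcases eq_or_ne y 0 with hy | hy
  · exact Or.inl hy
  right
  have h₁ := mul_nonneg h.1.le (sub_nonneg.2 (one_le_sq_sub_abs_mul_add_sq (x := x) (Or.inr hy)))
  have h₂ := mul_nonneg (sub_nonneg.2 h.2.1) (sq_nonneg y)
  have h₃ := h.neg_mul_abs_le x y
  have hsum := form_sub_first_coeff_eq A m C x y
  have e₁ : A * (x ^ 2 - |x * y| + y ^ 2 - 1) = 0 := by linarith
  have e₂ : (C - A) * y ^ 2 = 0 := by linarith
  have e₃ : m * (x * y) + A * |x * y| = 0 := by linarith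
  have hAC : A = C := by
    linarith [(mul_eq_zero.1 e₂).resolve_right (pow_ne_zero 2 hy)]
  rcases eq_or_ne x 0 with hx | hx
  · exact Or.inl ⟨hAC, hx⟩
  right
  have hxy1 : |x * y| = 1 := by
    have ht := (mul_eq_zero.1 e₁).resolve_left h.1.ne'
    rw [abs_mul] at ht ⊢
    have := Int.one_le_abs hx
    have := Int.one_le_abs hy
    nlinarith [sq_abs x, sq_abs y]
  have hm : m * (x * y) = -A := by rw [hxy1] at e₃; linarith
  rcases abs_eq (zero_le_one' ℤ) |>.1 hxy1 with h1 | h1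
  · refine ⟨hAC, by simpa [h1] using hm, ?_⟩
    rcases Int.eq_one_or_neg_one_of_mul_eq_one' h1 with ⟨rfl, rfl⟩ | ⟨rfl, rfl⟩ <;> rfl
  · rw [h1] at hm
    linarith [h.2.2.2.1]

theorem first_coeff_eq_of_transform {A' m' C' p q u v : ℤ} (h : IsReducedForm A m C)
    (h' : IsReducedForm A' m' C') (hdet : p * v - q * u = 1)
    (hA' : A' = A * p ^ 2 + m * p * u + C * u ^ 2)
    (hm' : m' = 2 * A * p * q + m * (p * v + q * u) + 2 * C * u * v)
    (hC' : C' = A * q ^ 2 + m * q * v + C * v ^ 2) : A' = A := by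
  have hA_inv : A = A' * v ^ 2 + m' * v * (-u) + C' * (-u) ^ 2 := by
    rw [hA', hm', hC']
    linear_combination (-A) * (p * v - q * u + 1) * hdet
  exact le_antisymm
    (hA_inv ▸ h'.le_eval (ne_zero_or_ne_zero_of_mul_sub_mul_eq_one (p := v) (v := p) (q := -q)
      (by linear_combination hdet)))
    (hA' ▸ h.le_eval (ne_zero_or_ne_zero_of_mul_sub_mul_eq_one hdet))

theorem eq_of_transform {A' m' C' p q u v : ℤ} (h : IsReducedForm A m C)
    (h' : IsReducedForm A' m' C') (hdet : p * v - q * u = 1)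
    (hA' : A' = A * p ^ 2 + m * p * u + C * u ^ 2)
    (hm' : m' = 2 * A * p * q + m * (p * v + q * u) + 2 * C * u * v)
    (hC' : C' = A * q ^ 2 + m * q * v + C * v ^ 2) :
    A' = A ∧ m' = m ∧ C' = C := by
  have hAA := first_coeff_eq_of_transform h h' hdet hA' hm' hC'
  have hdisc : m' ^ 2 - 4 * A' * C' = m ^ 2 - 4 * A * C := by
    rw [hA', hm', hC']
    linear_combination (m ^ 2 - 4 * A * C) * (p * v - q * u + 1) * hdet
  have hmm : m' = m := by
    -- the first column `(p, u)` attains the minimum `A`, which leaves three shapes for it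
    have key := h.eq_zero_or_of_eval_eq (hA' ▸ hAA)
    obtain ⟨hA, -, hm₁, hm₂, htie⟩ := h
    obtain ⟨-, -, hm₁', hm₂', htie'⟩ := h'
    rcases key with rfl | ⟨rfl, rfl⟩ | ⟨rfl, rfl, rfl⟩
    · have hpq : p * q = 0 := by nlinarith
      linear_combination hm' + 2 * A * hpq + m * hdet
    · have hm' : m' = -m + 2 * A * (u * v) := by linear_combination hm' - m * hdet
      have huv₁ : u * v ≤ 0 := by nlinarith [htie rfl]
      have huv₂ : -1 ≤ u * v := by nlinarith
      rcases (by omega : u * v = 0 ∨ u * v = -1) with huv | huv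
      all_goals rw [huv] at hm'
      · have hCA : C' = A := by subst hm'; nlinarith
        linarith [htie rfl, htie' (hAA.trans hCA.symm)]
      · linarith
    · have hm' : m' = A * (2 * (p * q) + 1) := by linear_combination hm' + A * hdet
      have hpq₁ : p * q < 0 := by nlinarith
      have hpq₂ : -1 ≤ p * q := by nlinarith
      rw [hm', (by omega : p * q = -1)]
      ring
  refine ⟨hAA, hmm, ?_⟩
  rw [hAA, hmm] at hdisc
  have : A * C' = A * C := by linarith
  exact mul_left_cancel₀ h.1.ne' this

end IsReducedForm

theorem Matrix.trace_sq_sub_four_mul_det_fin_two {R : Type*} [CommRing R]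
    (B : Matrix (Fin 2) (Fin 2) R) :
    B.trace ^ 2 - 4 * B.det = (B 1 1 - B 0 0) ^ 2 + 4 * (B 0 1 * B 1 0) := by
  rw [Matrix.trace_fin_two, Matrix.det_fin_two]
  ring

theorem Matrix.mul_neg_of_trace_sq_lt_four_mul_det {R : Type*} [CommRing R] [LinearOrder R]
    [IsStrictOrderedRing R] {B : Matrix (Fin 2) (Fin 2) R} (hB : B.trace ^ 2 < 4 * B.det) :
    B 0 1 * B 1 0 < 0 := by
  have := B.trace_sq_sub_four_mul_det_fin_two
  nlinarith [sq_nonneg (B 1 1 - B 0 0)]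

def slConj (U : SL(2, ℤ)) (B : Matrix (Fin 2) (Fin 2) ℤ) : Matrix (Fin 2) (Fin 2) ℤ :=
  (↑(U⁻¹) : Matrix (Fin 2) (Fin 2) ℤ) * B * (↑U : Matrix (Fin 2) (Fin 2) ℤ)

section slConj

variable (U : SL(2, ℤ)) (B : Matrix (Fin 2) (Fin 2) ℤ)

theorem slConj_mul (V : SL(2, ℤ)) : slConj (U * V) B = slConj V (slConj U B) := by
  rw [slConj, slConj, slConj, mul_inv_rev, Matrix.SpecialLinearGroup.coe_mul,
    Matrix.SpecialLinearGroup.coe_mul]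
  simp only [Matrix.mul_assoc]

theorem trace_slConj : (slConj U B).trace = B.trace := by
  rw [slConj, Matrix.trace_mul_cycle, Matrix.SpecialLinearGroup.coe_inv, Matrix.mul_adjugate,
    U.2, one_smul, Matrix.one_mul]

theorem det_slConj : (slConj U B).det = B.det := by
  simp [slConj, Matrix.det_adjugate]

theorem slConj_apply_one_zero :
    slConj U B 1 0 = B 1 0 * U 0 0 ^ 2 + (B 1 1 - B 0 0) * U 0 0 * U 1 0 - B 0 1 * U 1 0 ^ 2 := by
  simp only [slConj, Matrix.SpecialLinearGroup.coe_inv, Matrix.adjugate_fin_two, Matrix.mul_apply,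
    Fin.sum_univ_two, Matrix.of_apply, Matrix.cons_val', Matrix.cons_val_zero, Matrix.cons_val_one,
    Matrix.cons_val_fin_one]
  ring

theorem neg_slConj_apply_zero_one :
    -slConj U B 0 1 = B 1 0 * U 0 1 ^ 2 + (B 1 1 - B 0 0) * U 0 1 * U 1 1 - B 0 1 * U 1 1 ^ 2 := by
  simp only [slConj, Matrix.SpecialLinearGroup.coe_inv, Matrix.adjugate_fin_two, Matrix.mul_apply,
    Fin.sum_univ_two, Matrix.of_apply, Matrix.cons_val', Matrix.cons_val_zero, Matrix.cons_val_one,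
    Matrix.cons_val_fin_one]
  ring

theorem slConj_apply_sub :
    slConj U B 1 1 - slConj U B 0 0 = 2 * B 1 0 * U 0 0 * U 0 1 +
      (B 1 1 - B 0 0) * (U 0 0 * U 1 1 + U 0 1 * U 1 0) - 2 * B 0 1 * U 1 0 * U 1 1 := by
  simp only [slConj, Matrix.SpecialLinearGroup.coe_inv, Matrix.adjugate_fin_two, Matrix.mul_apply,
    Fin.sum_univ_two, Matrix.of_apply, Matrix.cons_val', Matrix.cons_val_zero, Matrix.cons_val_one,
    Matrix.cons_val_fin_one]
  ring

end slConj

theorem exists_add_two_mul_mem_Ico (m c : ℤ) (hc : c ≠ 0) :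
    ∃ k : ℤ, m + 2 * c * k ∈ Set.Ico (-|c|) |c| := by
  have hp : 0 < 2 * |c| := by positivity
  refine ⟨-toIcoDiv hp (-|c|) m * c.sign, ?_⟩
  have hmem := toIcoMod_mem_Ico hp (-|c|) m
  rw [← self_sub_toIcoDiv_zsmul, smul_eq_mul, (by ring : -|c| + 2 * |c| = |c|)] at hmem
  convert hmem using 1
  linear_combination (-2 * toIcoDiv hp (-|c|) m) * Int.sign_mul_self_eq_abs c

/-- For `B = !![a, b; c, d]` with `b c < 0`, `(|c|, d - a, |b|)` is the form
`c x² + (d - a) x y - b y²` if `c > 0`, and minus its image under `(x, y) ↦ (x, -y)` if `c < 0`. -/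
def IsReducedMatrix (B : Matrix (Fin 2) (Fin 2) ℤ) : Prop :=
  IsReducedForm |B 1 0| (B 1 1 - B 0 0) |B 0 1|

theorem isReducedMatrix_iff (B : Matrix (Fin 2) (Fin 2) ℤ) :
    IsReducedMatrix B ↔ 0 < |B 1 0| ∧ |B 1 0| ≤ |B 0 1| ∧
      -|B 1 0| < B 0 0 - B 1 1 ∧ B 0 0 - B 1 1 ≤ |B 1 0| ∧
      (|B 1 0| = |B 0 1| → 0 ≤ B 0 0 - B 1 1) := by
  constructor <;> rintro ⟨h₁, h₂, h₃, h₄, h₅⟩ <;>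
    exact ⟨h₁, h₂, by linarith, by linarith, fun h => by linarith [h₅ h]⟩

theorem exists_isReducedMatrix_slConj_or_abs_lt (B : Matrix (Fin 2) (Fin 2) ℤ) (hc : B 1 0 ≠ 0) :
    ∃ U : SL(2, ℤ), IsReducedMatrix (slConj U B) ∨ |slConj U B 1 0| < |B 1 0| := by
  obtain ⟨k, hk₁, hk₂⟩ := exists_add_two_mul_mem_Ico (B 1 1 - B 0 0) (B 1 0) hc
  set B₁ := slConj (T ^ k) B
  have hc₁ : B₁ 1 0 = B 1 0 := by simp [B₁, slConj_apply_one_zero, coe_T_zpow]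
  have hm₁ : B₁ 1 1 - B₁ 0 0 = B 1 1 - B 0 0 + 2 * B 1 0 * k := by
    simp only [B₁, slConj_apply_sub, coe_T_zpow, Matrix.of_apply, Matrix.cons_val',
      Matrix.cons_val_zero, Matrix.cons_val_one, Matrix.cons_val_fin_one]
    ring
  have hS₁ : slConj S B₁ 1 0 = -B₁ 0 1 := by simp [slConj_apply_one_zero, coe_S]
  have hS₂ : slConj S B₁ 0 1 = -B₁ 1 0 :=
    neg_eq_iff_eq_neg.1 (by simpa [coe_S] using neg_slConj_apply_zero_one S B₁)
  have hS₃ : slConj S B₁ 1 1 - slConj S B₁ 0 0 = -(B₁ 1 1 - B₁ 0 0) := by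
    simp [slConj_apply_sub, coe_S]
  have hpos : 0 < |B 1 0| := abs_pos.2 hc
  rcases lt_or_ge |B₁ 0 1| |B 1 0| with hlt | hge
  · exact ⟨T ^ k * S, Or.inr (by rwa [slConj_mul, hS₁, abs_neg])⟩
  by_cases htie : |B 1 0| = |B₁ 0 1| ∧ 0 < B₁ 1 1 - B₁ 0 0
  · refine ⟨T ^ k * S, Or.inl ?_⟩
    rw [IsReducedMatrix, slConj_mul, hS₁, hS₂, hS₃, abs_neg, abs_neg, hc₁, ← htie.1]
    exact ⟨hpos, le_rfl, by linarith, by linarith, fun _ => by linarith⟩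
  · refine ⟨T ^ k, Or.inl ?_⟩
    change IsReducedForm |B₁ 1 0| (B₁ 1 1 - B₁ 0 0) |B₁ 0 1|
    rw [hc₁, hm₁]
    exact ⟨hpos, hge, hk₁, hk₂, fun h => not_lt.1 fun h' => htie ⟨h, hm₁ ▸ h'⟩⟩

theorem exists_isReducedMatrix_slConj (B : Matrix (Fin 2) (Fin 2) ℤ)
    (hB : B.trace ^ 2 < 4 * B.det) : ∃ U : SL(2, ℤ), IsReducedMatrix (slConj U B) := by
  induction h : (B 1 0).natAbs using Nat.strong_induction_on generalizing B with
  | _ n ih =>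
  have hc : B 1 0 ≠ 0 := right_ne_zero_of_mul (Matrix.mul_neg_of_trace_sq_lt_four_mul_det hB).ne
  obtain ⟨U, hU | hlt⟩ := exists_isReducedMatrix_slConj_or_abs_lt B hc
  · exact ⟨U, hU⟩
  · have hB' : (slConj U B).trace ^ 2 < 4 * (slConj U B).det := by
      rwa [trace_slConj, det_slConj]
    obtain ⟨V, hV⟩ := ih _ (by rw [← h]; zify; exact hlt) _ hB' rfl
    exact ⟨U * V, by rwa [slConj_mul]⟩

theorem exists_abs_eq_mul_of_mul_neg {b c : ℤ} (hbc : b * c < 0) :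
    ∃ ε : ℤ, (ε = 1 ∨ ε = -1) ∧ |c| = ε * c ∧ |b| = -(ε * b) := by
  rcases lt_or_gt_of_ne (right_ne_zero_of_mul hbc.ne) with hc | hc
  · refine ⟨-1, Or.inr rfl, by rw [abs_of_neg hc]; ring, ?_⟩
    rw [abs_of_pos (pos_of_mul_neg_left hbc hc.le)]; ring
  · refine ⟨1, Or.inl rfl, by rw [abs_of_pos hc]; ring, ?_⟩
    rw [abs_of_neg (neg_of_mul_neg_left hbc hc.le)]; ring

/-- With `ε` the sign of `c`, substituting `!![p, ε q; ε u, v]` (for `U = !![p, q; u, v]`) into the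
normalized form `(|c|, d - a, |b|)` of `B` gives the form `(ε c', d' - a', -ε b')` of
`slConj U B`. -/
theorem slConj_coeffs_eq_transform (U : SL(2, ℤ)) {B : Matrix (Fin 2) (Fin 2) ℤ} {ε : ℤ}
    (hε : ε * ε = 1) (hεc : |B 1 0| = ε * B 1 0) (hεb : |B 0 1| = -(ε * B 0 1)) :
    ε * slConj U B 1 0 = |B 1 0| * U 0 0 ^ 2 + (B 1 1 - B 0 0) * U 0 0 * (ε * U 1 0) +
      |B 0 1| * (ε * U 1 0) ^ 2 ∧
    slConj U B 1 1 - slConj U B 0 0 = 2 * |B 1 0| * U 0 0 * (ε * U 0 1) +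
      (B 1 1 - B 0 0) * (U 0 0 * U 1 1 + ε * U 0 1 * (ε * U 1 0)) +
      2 * |B 0 1| * (ε * U 1 0) * U 1 1 ∧
    -(ε * slConj U B 0 1) = |B 1 0| * (ε * U 0 1) ^ 2 +
      (B 1 1 - B 0 0) * (ε * U 0 1) * U 1 1 + |B 0 1| * U 1 1 ^ 2 := by
  rw [hεc, hεb]
  refine ⟨?_, ?_, ?_⟩
  · linear_combination ε * slConj_apply_one_zero U B + B 0 1 * ε * U 1 0 ^ 2 * hε
  · linear_combination slConj_apply_sub U B - (2 * B 1 0 * U 0 0 * U 0 1 +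
      (B 1 1 - B 0 0) * U 0 1 * U 1 0 - 2 * B 0 1 * U 1 0 * U 1 1) * hε
  · linear_combination ε * neg_slConj_apply_zero_one U B - ε * B 1 0 * U 0 1 ^ 2 * hε

theorem slConj_eq_self_of_isReducedMatrix {B : Matrix (Fin 2) (Fin 2) ℤ} (hB : B 0 1 * B 1 0 < 0)
    {U : SL(2, ℤ)} (h : IsReducedMatrix B) (h' : IsReducedMatrix (slConj U B)) :
    slConj U B = B := by
  obtain ⟨ε, hε, hεc, hεb⟩ := exists_abs_eq_mul_of_mul_neg hB
  have hε₂ : ε * ε = 1 := by rcases hε with rfl | rfl <;> norm_num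
  have habs : ∀ x : ℤ, 0 < ε * x → |x| = ε * x := fun x hx => by
    rw [← abs_of_pos hx, abs_mul, (by rcases hε with rfl | rfl <;> norm_num : |ε| = 1), one_mul]
  obtain ⟨hc', hm', hb'⟩ := slConj_coeffs_eq_transform U hε₂ hεc hεb
  have hdet : U 0 0 * U 1 1 - ε * U 0 1 * (ε * U 1 0) = 1 := by
    have := U.2
    rw [Matrix.det_fin_two] at this
    linear_combination this - U 0 1 * U 1 0 * hε₂
  have hc'_pos : 0 < ε * slConj U B 1 0 := h.1.trans_le (hc' ▸ h.le_eval
    (ne_zero_or_ne_zero_of_mul_sub_mul_eq_one hdet))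
  have hb'_pos : 0 < -(ε * slConj U B 0 1) := h.1.trans_le (hb' ▸ h.le_eval
    (ne_zero_or_ne_zero_of_mul_sub_mul_eq_one (p := ε * U 0 1) (v := -U 1 0 * ε) (q := -U 0 0)
      (u := U 1 1) (by linear_combination hdet)))
  have h'' : IsReducedForm (ε * slConj U B 1 0) (slConj U B 1 1 - slConj U B 0 0)
      (-(ε * slConj U B 0 1)) := by
    unfold IsReducedMatrix at h'
    rwa [habs _ hc'_pos, ← abs_neg, habs _ (by linarith), mul_neg] at h'
  obtain ⟨hc, hm, hb⟩ := h.eq_of_transform h'' hdet hc' hm' hb'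
  have hε0 : ε ≠ 0 := by rintro rfl; simp at hε₂
  have hc := mul_left_cancel₀ hε0 (hc.trans hεc)
  have hb := mul_left_cancel₀ hε0 (neg_inj.1 (hb.trans hεb))
  have htr := trace_slConj U B
  rw [Matrix.trace_fin_two, Matrix.trace_fin_two] at htr
  have ha : slConj U B 0 0 = B 0 0 := by linarith
  have hd : slConj U B 1 1 = B 1 1 := by linarith
  rw [Matrix.eta_fin_two (slConj U B), ha, hb, hc, hd, ← Matrix.eta_fin_two B]

theorem abs_apply_le_of_isReducedMatrix {B : Matrix (Fin 2) (Fin 2) ℤ} (h : IsReducedMatrix B)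
    (i j : Fin 2) : |B i j| ≤ |B.trace| + 2 * |B.trace ^ 2 - 4 * B.det| := by
  obtain ⟨hc, hcb, hm₁, hm₂, -⟩ := h
  have hΔ := B.trace_sq_sub_four_mul_det_fin_two
  set Δ := B.trace ^ 2 - 4 * B.det
  have hm : (B 1 1 - B 0 0) ^ 2 ≤ |B 1 0| ^ 2 := sq_le_sq' hm₁ hm₂.le
  have hbc : 4 * (|B 0 1| * |B 1 0|) ≤ |Δ| + |B 1 0| ^ 2 := by
    rw [← abs_mul]
    cases abs_cases (B 0 1 * B 1 0) <;> cases abs_cases Δ <;> nlinarith [sq_nonneg (B 1 1 - B 0 0)]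
  have hc₁ : 1 ≤ |B 1 0| := hc
  have hc₂ : |B 1 0| ≤ |Δ| := by nlinarith
  have hb : |B 0 1| ≤ 2 * |Δ| := by nlinarith
  have htr := B.trace_fin_two
  have htr₁ := neg_abs_le B.trace
  have htr₂ := le_abs_self B.trace
  fin_cases i <;> fin_cases j <;> simp only [Fin.zero_eta, Fin.mk_one] <;>
    rw [abs_le] <;> constructor <;> linarith [abs_le.1 hc₂, abs_le.1 hb]

theorem stmt_15_general (r s : ℤ)
    (hdisc : (r : ℚ) ^ 2 / 4 - (s : ℚ) < 0) :
    let M : Set (Matrix (Fin 2) (Fin 2) ℤ) := {B |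
      B 0 0 + B 1 1 = r ∧ B 0 0 * B 1 1 - B 0 1 * B 1 0 = s ∧
      0 < |B 1 0| ∧ |B 1 0| ≤ |B 0 1| ∧
      -|B 1 0| < B 0 0 - B 1 1 ∧ B 0 0 - B 1 1 ≤ |B 1 0| ∧
      (|B 1 0| = |B 0 1| → 0 ≤ B 0 0 - B 1 1)}
    M.Finite ∧ ∀ B : Matrix (Fin 2) (Fin 2) ℤ, B.trace = r → B.det = s →
      ∃! B' : Matrix (Fin 2) (Fin 2) ℤ, B' ∈ M ∧
        ∃ U : Matrix.SpecialLinearGroup (Fin 2) ℤ,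
          B' = (↑(U⁻¹) : Matrix (Fin 2) (Fin 2) ℤ) * B * (↑U : Matrix (Fin 2) (Fin 2) ℤ) := by
  intro M
  have hM : M = {B | B.trace = r ∧ B.det = s ∧ IsReducedMatrix B} := by
    ext B
    simp only [M, Set.mem_ofPred_eq, Matrix.trace_fin_two, Matrix.det_fin_two, isReducedMatrix_iff]
  have hD : r ^ 2 < 4 * s := by
    have : ((r ^ 2 : ℤ) : ℚ) < ((4 * s : ℤ) : ℚ) := by push_cast; linarith
    exact_mod_cast this
  rw [hM]
  refine ⟨?_, fun B htr hdet => ?_⟩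
  · set K := |r| + 2 * |r ^ 2 - 4 * s|
    refine (Set.finite_Icc (-fun _ _ => K : Fin 2 → Fin 2 → ℤ) fun _ _ => K).subset ?_
    rintro B ⟨rfl, rfl, hB⟩
    exact ⟨fun i j => (abs_le.1 (abs_apply_le_of_isReducedMatrix hB i j)).1,
      fun i j => (abs_le.1 (abs_apply_le_of_isReducedMatrix hB i j)).2⟩
  · obtain ⟨U, hU⟩ := exists_isReducedMatrix_slConj B (htr ▸ hdet ▸ hD)
    refine ⟨slConj U B, ⟨⟨by rw [trace_slConj, htr], by rw [det_slConj, hdet], hU⟩, U, rfl⟩, ?_⟩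
    rintro _ ⟨⟨-, -, hW⟩, W, rfl⟩
    have hUB : (slConj U B).trace ^ 2 < 4 * (slConj U B).det := by
      rw [trace_slConj, det_slConj, htr, hdet]
      exact hD
    change IsReducedMatrix (slConj W B) at hW
    change slConj W B = slConj U B
    rw [← mul_inv_cancel_left U W, slConj_mul] at hW ⊢
    exact slConj_eq_self_of_isReducedMatrix (Matrix.mul_neg_of_trace_sq_lt_four_mul_det hUB) hU hW

theorem stmt_15 (r s : ℤ)
    (hirr : Irreducible (Polynomial.X ^ 2 - Polynomial.C (r : ℚ) * Polynomial.X +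
      Polynomial.C (s : ℚ)))
    (hdisc : (r : ℚ) ^ 2 / 4 - (s : ℚ) < 0) :
    let M : Set (Matrix (Fin 2) (Fin 2) ℤ) := {B |
      B 0 0 + B 1 1 = r ∧ B 0 0 * B 1 1 - B 0 1 * B 1 0 = s ∧
      0 < |B 1 0| ∧ |B 1 0| ≤ |B 0 1| ∧
      -|B 1 0| < B 0 0 - B 1 1 ∧ B 0 0 - B 1 1 ≤ |B 1 0| ∧
      (|B 1 0| = |B 0 1| → 0 ≤ B 0 0 - B 1 1)}
    M.Finite ∧ ∀ B : Matrix (Fin 2) (Fin 2) ℤ, B.trace = r → B.det = s →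
      ∃! B' : Matrix (Fin 2) (Fin 2) ℤ, B' ∈ M ∧
        ∃ U : Matrix.SpecialLinearGroup (Fin 2) ℤ,
          B' = (↑(U⁻¹) : Matrix (Fin 2) (Fin 2) ℤ) * B * (↑U : Matrix (Fin 2) (Fin 2) ℤ) :=
  stmt_15_general r s hdisc
end

section
/- Every GL₂(ℤ)-conjugacy class of matrices B ∈ M₂(ℤ) with eigenvalues λ ∈ ℕ (λ ≥ 1) and 0, where B is not a scalar matrix or λ ≠ 0, contains exactly one matrix of the form [[λ, μ],[0,0]] with μ ∈ ℤ and 0 ≤ μ ≤ λ/2. -/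
/-!
Since `tr B = λ` and `det B = 0`, `λ` is a root of the characteristic polynomial, so `B` has an
eigenvector for `λ`, which over `ℤ` may be taken primitive. Completing it to a basis of `ℤ²`
conjugates `B` to `[[λ, m], [0, 0]]`. A matrix conjugating `[[λ, m], [0, 0]]` to `[[λ, m'], [0, 0]]`
must be upper triangular, so this happens exactly when `m' = ±m + kλ`; and every class of `ℤ / λ`
up to sign has exactly one representative in `[0, λ / 2]`.
-/

open Matrix Polynomial

theorem isConj_iff_exists_units_inv_mul_mul_eq {M : Type*} [Monoid M] {a b : M} :
    IsConj a b ↔ ∃ c : Mˣ, ↑c⁻¹ * b * ↑c = a := by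
  refine exists_congr fun c => ?_
  rw [SemiconjBy, mul_assoc, Units.inv_mul_eq_iff_eq_mul, eq_comm]

namespace Matrix

variable {n R : Type*} [Fintype n] [DecidableEq n] [CommRing R]

theorem exists_mulVec_eq_smul_of_isRoot_charpoly [IsDomain R] {B : Matrix n n R} {l : R}
    (h : B.charpoly.IsRoot l) : ∃ v ≠ 0, B *ᵥ v = l • v := by
  rw [IsRoot.def, eval_charpoly] at h
  obtain ⟨v, hv, hBv⟩ := exists_mulVec_eq_zero_iff.mpr h
  refine ⟨v, hv, ?_⟩
  rwa [sub_mulVec, scalar_apply, ← smul_one_eq_diagonal, smul_mulVec, one_mulVec, sub_eq_zero,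
    eq_comm] at hBv

theorem col_units_inv_mul_mul_of_mulVec_col_eq (B : Matrix n n R) (C : GL n R) {j : n} {l : R}
    (h : B *ᵥ (C : Matrix n n R).col j = l • (C : Matrix n n R).col j) :
    ((↑(C⁻¹) : Matrix n n R) * B * C).col j = Pi.single j l := by
  rw [← mulVec_single_one, ← mulVec_mulVec, ← mulVec_mulVec, mulVec_single_one, h, mulVec_smul,
    ← mulVec_single_one, mulVec_mulVec, Units.inv_mul, one_mulVec, ← Pi.single_smul', smul_eq_mul,
    mul_one]

theorem exists_col_zero_eq_of_isCoprime {v : Fin 2 → R} (h : IsCoprime (v 0) (v 1)) :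
    ∃ C : GL (Fin 2) R, (C : Matrix (Fin 2) (Fin 2) R).col 0 = v := by
  obtain ⟨u, t, hut⟩ := h
  have hdet : (!![v 0, -t; v 1, u]).det = 1 := by rw [det_fin_two_of]; linear_combination hut
  refine ⟨nonsingInvUnit !![v 0, -t; v 1, u] (hdet ▸ isUnit_one), ?_⟩
  ext i; fin_cases i <;> rfl

theorem isConj_of_mulVec_col_zero_eq (B : Matrix (Fin 2) (Fin 2) R) (C : GL (Fin 2) R) {l : R}
    (h : B *ᵥ (C : Matrix (Fin 2) (Fin 2) R).col 0 = l • (C : Matrix (Fin 2) (Fin 2) R).col 0) :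
    IsConj !![l, ((↑(C⁻¹) : Matrix (Fin 2) (Fin 2) R) * B * C) 0 1; 0, B.trace - l] B := by
  set X := (↑(C⁻¹) : Matrix (Fin 2) (Fin 2) R) * B * C
  have hcol := col_units_inv_mul_mul_of_mulVec_col_eq B C h
  have h00 : X 0 0 = l := by simpa only [col_apply, Pi.single_eq_same] using congrFun hcol 0
  have h10 : X 1 0 = 0 := by
    simpa only [col_apply, Pi.single_eq_of_ne one_ne_zero] using congrFun hcol 1
  have htr : X 0 0 + X 1 1 = B.trace := by rw [← trace_fin_two]; exact trace_units_conj' C B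
  have h11 : X 1 1 = B.trace - l := by linear_combination htr - h00
  have hX : X = !![l, X 0 1; 0, B.trace - l] :=
    calc X = !![X 0 0, X 0 1; X 1 0, X 1 1] := eta_fin_two X
      _ = !![l, X 0 1; 0, B.trace - l] := by rw [h00, h10, h11]
  rw [← hX]
  exact isConj_iff_exists_units_inv_mul_mul_eq.mpr ⟨C, rfl⟩

theorem isConj_upperTriangular_iff [NoZeroDivisors R] {l : R} (hl : l ≠ 0) (m m' : R) :
    IsConj !![l, m; 0, 0] !![l, m'; 0, 0] ↔ ∃ ε k : R, IsUnit ε ∧ m' = ε * m + l * k := by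
  constructor
  · rintro ⟨C, hC⟩
    obtain ⟨p, q, r, s, hpqrs⟩ : ∃ p q r s, (C : Matrix (Fin 2) (Fin 2) R) = !![p, q; r, s] :=
      ⟨_, _, _, _, eta_fin_two _⟩
    rw [SemiconjBy, hpqrs, mul_fin_two, mul_fin_two] at hC
    have h10 := congrFun (congrFun hC 1) 0
    have h01 := congrFun (congrFun hC 0) 1
    simp only [of_apply, cons_val_one, cons_val_zero] at h10 h01
    have hr : r = 0 := (mul_eq_zero.mp (by linear_combination h10)).resolve_right hl
    have hps : IsUnit (p * s) := by
      have := (isUnit_iff_isUnit_det _).mp C.isUnit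
      rwa [hpqrs, det_fin_two_of, hr, mul_zero, sub_zero] at this
    obtain ⟨b, hb⟩ := (isUnit_of_mul_isUnit_right hps).exists_right_inv
    refine ⟨p * b, -q * b, (isUnit_of_mul_isUnit_left hps).mul (.of_mul_eq_one_right s hb), ?_⟩
    linear_combination (-b) * h01 - m' * hb
  · rintro ⟨ε, k, hε, rfl⟩
    have hdet : (!![ε, -k; 0, 1]).det = ε := by simp [det_fin_two_of]
    refine ⟨nonsingInvUnit !![ε, -k; 0, 1] (by rwa [hdet]), ?_⟩
    change !![ε, -k; 0, 1] * _ = _ * !![ε, -k; 0, 1]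
    simp only [mul_fin_two]
    ring_nf

end Matrix

namespace Int

theorem exists_isCoprime_mulVec_eq_smul {B : Matrix (Fin 2) (Fin 2) ℤ} {l : ℤ}
    {v : Fin 2 → ℤ} (hv : v ≠ 0) (h : B *ᵥ v = l • v) :
    ∃ w : Fin 2 → ℤ, IsCoprime (w 0) (w 1) ∧ B *ᵥ w = l • w := by
  have hgcd : 0 < gcd (v 0) (v 1) := by
    refine gcd_pos_iff.mpr (not_and_or.mp fun h0 => hv ?_)
    ext i; fin_cases i <;> simp [h0.1, h0.2]
  obtain ⟨g, x, y, hg, hxy, hx, hy⟩ := exists_gcd_one' hgcd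
  have hvg : v = (g : ℤ) • ![x, y] := by
    ext i; fin_cases i <;> simp [hx, hy, mul_comm]
  refine ⟨![x, y], isCoprime_iff_gcd_eq_one.mpr hxy, ?_⟩
  rw [hvg, mulVec_smul, smul_comm] at h
  exact smul_right_injective _ (by positivity) h

theorem exists_isConj_of_trace_eq_of_det_eq_zero {B : Matrix (Fin 2) (Fin 2) ℤ} {l : ℤ}
    (htr : B.trace = l) (hdet : B.det = 0) : ∃ m, IsConj !![l, m; 0, 0] B := by
  have hroot : B.charpoly.IsRoot l := by
    rw [IsRoot.def, charpoly_fin_two, htr, hdet]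
    simp only [eval_add, eval_sub, eval_pow, eval_mul, eval_X, eval_C]
    ring
  obtain ⟨v, hv, hBv⟩ := exists_mulVec_eq_smul_of_isRoot_charpoly hroot
  obtain ⟨w, hw, hBw⟩ := exists_isCoprime_mulVec_eq_smul hv hBv
  obtain ⟨C, hC⟩ := exists_col_zero_eq_of_isCoprime hw
  have hconj := isConj_of_mulVec_col_zero_eq B C (l := l) (by rwa [hC])
  rw [htr, sub_self] at hconj
  exact ⟨_, hconj⟩

theorem isConj_upperTriangular_iff {l : ℤ} (hl : l ≠ 0) (m m' : ℤ) :
    IsConj !![l, m; 0, 0] !![l, m'; 0, 0] ↔ m' ≡ m [ZMOD l] ∨ m' ≡ -m [ZMOD l] := by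
  simp only [Matrix.isConj_upperTriangular_iff hl, Int.isUnit_iff, Int.modEq_iff_dvd]
  constructor
  · rintro ⟨ε, k, rfl | rfl, rfl⟩
    · exact .inl ⟨-k, by ring⟩
    · exact .inr ⟨-k, by ring⟩
  · rintro (⟨k, hk⟩ | ⟨k, hk⟩)
    · exact ⟨1, -k, .inl rfl, by linear_combination -hk⟩
    · exact ⟨-1, -k, .inr rfl, by linear_combination -hk⟩

theorem eq_of_modEq_or_modEq_neg {l μ ν : ℤ} (hl : 0 < l) (hμ : 0 ≤ μ ∧ 2 * μ ≤ l)
    (hν : 0 ≤ ν ∧ 2 * ν ≤ l) (h : μ ≡ ν [ZMOD l] ∨ μ ≡ -ν [ZMOD l]) : μ = ν := by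
  rcases h with h | h <;> obtain ⟨k, hk⟩ := Int.modEq_iff_dvd.mp h
  · obtain rfl : k = 0 := by nlinarith
    linarith
  · obtain rfl | rfl : k = 0 ∨ k = -1 := by
      have : -1 ≤ k ∧ k ≤ 0 := ⟨by nlinarith, by nlinarith⟩
      omega
    all_goals linarith

theorem existsUnique_modEq_or_modEq_neg {l : ℤ} (hl : 0 < l) (m : ℤ) :
    ∃! μ, (0 ≤ μ ∧ 2 * μ ≤ l) ∧ (μ ≡ m [ZMOD l] ∨ μ ≡ -m [ZMOD l]) := by
  have hr := Int.mod_modEq m l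
  have hr0 := Int.emod_nonneg m hl.ne'
  have hrl := Int.emod_lt_of_pos m hl
  have hexists : ∃ μ, (0 ≤ μ ∧ 2 * μ ≤ l) ∧ (μ ≡ m [ZMOD l] ∨ μ ≡ -m [ZMOD l]) := by
    by_cases h2 : 2 * (m % l) ≤ l
    · exact ⟨m % l, ⟨hr0, h2⟩, .inl hr⟩
    · refine ⟨l - m % l, ⟨by omega, by omega⟩, .inr ?_⟩
      simpa using (Int.modEq_zero_iff_dvd.mpr dvd_rfl).sub hr
  obtain ⟨μ, hμ, hμm⟩ := hexists
  refine ⟨μ, ⟨hμ, hμm⟩, fun ν ⟨hν, hνm⟩ => eq_of_modEq_or_modEq_neg hl hν hμ ?_⟩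
  rcases hνm with h | h <;> rcases hμm with h' | h'
  · exact .inl (h.trans h'.symm)
  · exact .inr (h.trans (by simpa using h'.neg.symm))
  · exact .inr (h.trans (by simpa using h'.neg.symm))
  · exact .inl (by simpa using h.neg.trans h'.neg.symm)

end Int

theorem stmt_16 (lam : ℕ) (hl : 1 ≤ lam) (B : Matrix (Fin 2) (Fin 2) ℤ)
    (htr : B.trace = (lam : ℤ)) (hdet : B.det = 0) :
    ∃! μ : ℤ, (0 ≤ μ ∧ 2 * μ ≤ (lam : ℤ)) ∧
      ∃ C : GL (Fin 2) ℤ, (↑(C⁻¹) : Matrix (Fin 2) (Fin 2) ℤ) * B *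
        (↑C : Matrix (Fin 2) (Fin 2) ℤ) = !![(lam : ℤ), μ; 0, 0] := by
  have hlam : (0 : ℤ) < lam := by exact_mod_cast hl
  obtain ⟨m, hm⟩ := Int.exists_isConj_of_trace_eq_of_det_eq_zero htr hdet
  have hconj (μ : ℤ) :
      (∃ C : GL (Fin 2) ℤ, (↑(C⁻¹) : Matrix (Fin 2) (Fin 2) ℤ) * B *
        (↑C : Matrix (Fin 2) (Fin 2) ℤ) = !![(lam : ℤ), μ; 0, 0]) ↔
        μ ≡ m [ZMOD lam] ∨ μ ≡ -m [ZMOD lam] := by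
    rw [← isConj_iff_exists_units_inv_mul_mul_eq, ← Int.isConj_upperTriangular_iff hlam.ne']
    exact ⟨fun h => hm.trans h.symm, fun h => h.symm.trans hm⟩
  simp_rw [hconj]
  exact Int.existsUnique_modEq_or_modEq_neg hlam m
end
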